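/- Let F be a field of characteristic zero, α₁,…,αₙ distinct in F, and let f ∈ F[u] with f(0) = 0. If Z(ħ,α_i,u) ∈ F(ħ)[[u]] is C-recursive, then Z̄(ħ,α_i,u) := e^{f(u)/ħ} Z(ħ,α_i,u) is also C-recursive with the same coefficients C_i^j(d). The key fact needed is that (e^{f(u)/ħ} − e^{f(u)/c})/(ħ − c) lies in F[ħ,ħ^{−1}][[u]] for any nonzero c ∈ F. -/

import Mathlib

/-- A family `Z`, given by its `u`-coefficients `Z hbar i d ∈ F` (functions of `hbar`),
is `C`-recursive if for each `i` and each degree `d`,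
`Z(hbar,α_i,u) = ∑_d (∑_{r=−N_d}^{N_d} Z^r_{i;d} hbar^{−r}) u^d
  + ∑_{d'≥1} ∑_{j≠i} C_i^j(d') u^{d'} (hbar − (α_j−α_i)/d')⁻¹ Z((α_j−α_i)/d', α_j, u)`
holds coefficientwise for all admissible `hbar`. -/
def CRecursive {F : Type*} [Field F] {n : ℕ} (α : Fin n → F)
    (C : Fin n → Fin n → ℕ → F) (Z : F → Fin n → ℕ → F) : Prop :=
  ∃ N : ℕ → ℕ, ∃ c : Fin n → ℕ → ℤ → F,
    ∀ (i : Fin n) (d : ℕ) (hbar : F), hbar ≠ 0 →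
      (∀ j : Fin n, j ≠ i → ∀ d' : ℕ, 1 ≤ d' → d' ≤ d → hbar ≠ (α j - α i) / (d' : F)) →
      Z hbar i d = (∑ r ∈ Finset.Icc (-(N d : ℤ)) ((N d : ℤ)), c i d r * hbar ^ (-r))
        + ∑ d' ∈ Finset.Icc 1 d, ∑ j ∈ Finset.univ.erase i,
            C i j d' * (hbar - (α j - α i) / (d' : F))⁻¹ *
              Z ((α j - α i) / (d' : F)) j (d - d')

/-- The `u^m`-coefficient of the formal exponential `e^{f(u)/hbar}` (for `f ∈ F[u]`
with `f(0) = 0`): `∑_{k≤m} [u^m](f^k) / (k! hbar^k)`. -/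
noncomputable def expCoeff {F : Type*} [Field F] (f : Polynomial F) (hbar : F) (m : ℕ) : F :=
  ∑ k ∈ Finset.range (m + 1),
    (f ^ k).coeff m * ((Nat.factorial k : F))⁻¹ * (hbar⁻¹) ^ k

/-! The `u^m`-coefficient of `e^{f(u)/ħ}` is `E_m(ħ⁻¹)` for a polynomial `E_m`, so for `c ≠ 0`
the difference quotient `(E_m(ħ⁻¹) - E_m(c⁻¹)) / (ħ - c)` is again a polynomial in `ħ⁻¹`.
Multiply the recursion for `Z` by `e^{f(u)/ħ}` and, in the term with the pole
`c = (α_j - α_i)/d'`, write `E_m(ħ⁻¹) = E_m(c⁻¹) + (ħ - c) · (difference quotient)`: the first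
part rebuilds `(ħ - c)⁻¹ Z̄(c, α_j, u)`, the second cancels the pole and joins the Laurent part.
Laurent parts are handled as elements of `F[T;T⁻¹]`; their supports give the bounds `N_d`. -/

open Finset LaurentPolynomial
open scoped Polynomial

section

variable {F : Type*} [Field F]

noncomputable def expPoly (f : F[X]) (m : ℕ) : F[X] :=
  ∑ k ∈ range (m + 1), Polynomial.C ((f ^ k).coeff m * (k.factorial : F)⁻¹) * Polynomial.X ^ k

theorem expCoeff_eq_eval_expPoly (f : F[X]) (hbar : F) (m : ℕ) :
    expCoeff f hbar m = (expPoly f m).eval hbar⁻¹ := by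
  simp [expCoeff, expPoly, Polynomial.eval_finsetSum]

-- `p - p(c⁻¹)` is divisible by `X - c⁻¹`, and `x⁻¹ - c⁻¹ = -(x - c) c⁻¹ x⁻¹`.
noncomputable def divDiffInv (p : F[X]) (c : F) : F[X] :=
  -Polynomial.C c⁻¹ * Polynomial.X *
    ((p - Polynomial.C (p.eval c⁻¹)) /ₘ (Polynomial.X - Polynomial.C c⁻¹))

theorem eval_inv_eq_add_sub_mul_divDiffInv (p : F[X]) {c x : F} (hc : c ≠ 0) (hx : x ≠ 0) :
    p.eval x⁻¹ = p.eval c⁻¹ + (x - c) * (divDiffInv p c).eval x⁻¹ := by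
  have hroot : (p - Polynomial.C (p.eval c⁻¹)).IsRoot c⁻¹ := by simp
  have h := congrArg (Polynomial.eval x⁻¹) (Polynomial.mul_divByMonic_eq_iff_isRoot.mpr hroot)
  simp only [Polynomial.eval_mul, Polynomial.eval_sub, Polynomial.eval_X, Polynomial.eval_C] at h
  rw [← sub_eq_iff_eq_add', ← h]
  simp only [divDiffInv, Polynomial.eval_mul, Polynomial.eval_neg, Polynomial.eval_C,
    Polynomial.eval_X]
  field_simp
  ring

noncomputable def toLaurentInv (p : F[X]) : F[T;T⁻¹] := p.eval₂ LaurentPolynomial.C (T (-1))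

theorem eval₂_toLaurentInv (p : F[X]) (x : Fˣ) :
    eval₂ (RingHom.id F) x (toLaurentInv p) = p.eval (x : F)⁻¹ := by
  have hC : (eval₂ (RingHom.id F) x).comp LaurentPolynomial.C = RingHom.id F := by
    ext; simp
  rw [toLaurentInv, Polynomial.hom_eval₂, hC, eval₂_T, zpow_neg_one, Units.val_inv_eq_inv_val]
  rfl

theorem eval₂_eq_sum_Icc (p : F[T;T⁻¹]) (x : Fˣ) {M : ℕ}
    (hM : ∀ r ∈ p.coeff.support, r.natAbs ≤ M) :
    eval₂ (RingHom.id F) x p = ∑ r ∈ Icc (-(M : ℤ)) M, p.coeff (-r) * (x : F) ^ (-r) := by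
  conv_lhs => rw [← p.sum_coeff_single]
  rw [Finsupp.sum, map_sum]
  simp only [single_eq_C_mul_T, eval₂_C_mul_T, RingHom.id_apply, Units.val_zpow_eq_zpow_val]
  rw [sum_subset (s₂ := Icc (-(M : ℤ)) M)]
  · exact sum_nbij' (- ·) (- ·) (by simp only [mem_Icc]; omega) (by simp only [mem_Icc]; omega)
      (by simp) (by simp) (by simp)
  · intro r hr
    have := hM r hr
    rw [mem_Icc]
    omega
  · intro r _ hr; simp [Finsupp.notMem_support_iff.mp hr]

theorem Finset.sum_range_sum_Icc_comm {M : Type*} [AddCommMonoid M] (d : ℕ) (X : ℕ → ℕ → M) :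
    ∑ a ∈ range (d + 1), ∑ e ∈ Icc 1 (d - a), X a e
      = ∑ e ∈ Icc 1 d, ∑ a ∈ range (d - e + 1), X a e := by
  rw [sum_sigma', sum_sigma']
  exact sum_nbij' (fun p => ⟨p.2, p.1⟩) (fun p => ⟨p.2, p.1⟩)
    (by simp only [mem_sigma, mem_range, mem_Icc]; omega)
    (by simp only [mem_sigma, mem_range, mem_Icc]; omega) (by simp) (by simp) (by simp)

section Recursion

variable {n : ℕ} (α : Fin n → F) (C : Fin n → Fin n → ℕ → F)

def AvoidsPoles (i : Fin n) (d : ℕ) (hbar : F) : Prop :=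
  ∀ j : Fin n, j ≠ i → ∀ d' : ℕ, 1 ≤ d' → d' ≤ d → hbar ≠ (α j - α i) / (d' : F)

variable {α} in
theorem AvoidsPoles.mono {i : Fin n} {d d₀ : ℕ} {hbar : F} (h : AvoidsPoles α i d hbar)
    (hd : d₀ ≤ d) : AvoidsPoles α i d₀ hbar :=
  fun j hj d' h1 h2 => h j hj d' h1 (h2.trans hd)

noncomputable def recTail (W : F → Fin n → ℕ → F) (hbar : F) (i : Fin n) (d : ℕ) : F :=
  ∑ d' ∈ Icc 1 d, ∑ j ∈ univ.erase i,
    C i j d' * (hbar - (α j - α i) / (d' : F))⁻¹ * W ((α j - α i) / (d' : F)) j (d - d')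

theorem cRecursive_iff_exists_laurent (Z : F → Fin n → ℕ → F) :
    CRecursive α C Z ↔ ∃ P : Fin n → ℕ → F[T;T⁻¹], ∀ i d (x : Fˣ), AvoidsPoles α i d x →
      Z x i d = eval₂ (RingHom.id F) x (P i d) + recTail α C Z x i d := by
  classical
  constructor
  · rintro ⟨N, c, hc⟩
    refine ⟨fun i d => ∑ r ∈ Icc (-(N d : ℤ)) (N d), LaurentPolynomial.C (c i d r) * T (-r),
      fun i d x hx => ?_⟩
    simp [hc i d x x.ne_zero hx, recTail]
  · rintro ⟨P, hP⟩
    refine ⟨fun d => univ.sup fun i => (P i d).coeff.support.sup Int.natAbs,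
      fun i d r => (P i d).coeff (-r), fun i d hbar hbar0 hx => ?_⟩
    have h := hP i d (Units.mk0 hbar hbar0) hx
    rw [Units.val_mk0] at h
    rw [h, eval₂_eq_sum_Icc]
    · rfl
    · exact fun r hr => (le_sup hr).trans
        (le_sup (f := fun i => (P i d).coeff.support.sup Int.natAbs) (mem_univ i))

end Recursion

section ExpTwist

variable {n : ℕ} (α : Fin n → F) (C : Fin n → Fin n → ℕ → F) (f : F[X])

noncomputable def expMul (W : F → Fin n → ℕ → F) (hbar : F) (i : Fin n) (d : ℕ) : F :=
  ∑ d' ∈ range (d + 1), expCoeff f hbar d' * W hbar i (d - d')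

noncomputable def expMulLaurentPart (Z : F → Fin n → ℕ → F) (P : Fin n → ℕ → F[T;T⁻¹])
    (i : Fin n) (d : ℕ) : F[T;T⁻¹] :=
  ∑ d' ∈ range (d + 1), toLaurentInv (expPoly f d') * P i (d - d') +
    ∑ e ∈ Icc 1 d, ∑ j ∈ univ.erase i, ∑ d' ∈ range (d - e + 1),
      LaurentPolynomial.C (C i j e * Z ((α j - α i) / e) j (d - e - d')) *
        toLaurentInv (divDiffInv (expPoly f d') ((α j - α i) / e))

theorem sum_expCoeff_mul_inv_sub {x q : F} (hx : x ≠ 0) (hq : q ≠ 0) (hxq : x ≠ q) (K : F)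
    (w : ℕ → F) (m : ℕ) :
    ∑ d' ∈ range (m + 1), expCoeff f x d' * (K * (x - q)⁻¹ * w (m - d')) =
      K * (x - q)⁻¹ * ∑ d' ∈ range (m + 1), expCoeff f q d' * w (m - d') +
        ∑ d' ∈ range (m + 1), K * w (m - d') * (divDiffInv (expPoly f d') q).eval x⁻¹ := by
  rw [mul_sum, ← sum_add_distrib]
  refine sum_congr rfl fun d' _ => ?_
  have hxq' : x - q ≠ 0 := sub_ne_zero.mpr hxq
  rw [expCoeff_eq_eval_expPoly, expCoeff_eq_eval_expPoly,
    eval_inv_eq_add_sub_mul_divDiffInv _ hq hx]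
  field_simp

theorem sum_expCoeff_mul_recTail [CharZero F] (hα : Function.Injective α)
    (Z : F → Fin n → ℕ → F) (i : Fin n) (d : ℕ) {x : F} (hx0 : x ≠ 0)
    (hx : AvoidsPoles α i d x) :
    ∑ d' ∈ range (d + 1), expCoeff f x d' * recTail α C Z x i (d - d') =
      recTail α C (expMul f Z) x i d + ∑ e ∈ Icc 1 d, ∑ j ∈ univ.erase i,
        ∑ d' ∈ range (d - e + 1), C i j e * Z ((α j - α i) / e) j (d - e - d') *
          (divDiffInv (expPoly f d') ((α j - α i) / e)).eval x⁻¹ := by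
  simp only [recTail, mul_sum]
  rw [sum_range_sum_Icc_comm, ← sum_add_distrib]
  refine sum_congr rfl fun e he => ?_
  rw [sum_comm, ← sum_add_distrib]
  refine sum_congr rfl fun j hj => ?_
  obtain ⟨he1, hed⟩ := mem_Icc.mp he
  have hji : j ≠ i := ne_of_mem_erase hj
  have hq : (α j - α i) / (e : F) ≠ 0 :=
    div_ne_zero (sub_ne_zero.mpr (hα.ne hji)) (Nat.cast_ne_zero.mpr (by omega))
  simp only [Nat.sub_right_comm d _ e]
  exact sum_expCoeff_mul_inv_sub f hx0 hq (hx j hji e he1 hed) _ _ _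

theorem expMul_eq_eval₂_add_recTail [CharZero F] (hα : Function.Injective α)
    (Z : F → Fin n → ℕ → F) (P : Fin n → ℕ → F[T;T⁻¹])
    (hP : ∀ i d (x : Fˣ), AvoidsPoles α i d x →
      Z x i d = eval₂ (RingHom.id F) x (P i d) + recTail α C Z x i d)
    (i : Fin n) (d : ℕ) (x : Fˣ) (hx : AvoidsPoles α i d x) :
    expMul f Z x i d = eval₂ (RingHom.id F) x (expMulLaurentPart α C f Z P i d) +
      recTail α C (expMul f Z) x i d := by
  have hsplit : expMul f Z x i d =
      ∑ d' ∈ range (d + 1), expCoeff f x d' * eval₂ (RingHom.id F) x (P i (d - d')) +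
        ∑ d' ∈ range (d + 1), expCoeff f x d' * recTail α C Z x i (d - d') := by
    rw [expMul, ← sum_add_distrib]
    exact sum_congr rfl fun d' _ => by rw [hP i _ x (hx.mono (Nat.sub_le d d')), mul_add]
  rw [hsplit, sum_expCoeff_mul_recTail α C f hα Z i d x.ne_zero hx, expMulLaurentPart]
  simp only [map_add, map_sum, map_mul, eval₂_toLaurentInv, eval₂_C, RingHom.id_apply,
    expCoeff_eq_eval_expPoly]
  ring

end ExpTwist

end

theorem stmt_6_general {F : Type*} [Field F] [CharZero F] {n : ℕ} (α : Fin n → F)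
    (hα : Function.Injective α) (C : Fin n → Fin n → ℕ → F) (Z : F → Fin n → ℕ → F)
    (hZ : CRecursive α C Z) (f : Polynomial F) :
    CRecursive α C (fun hbar i d =>
      ∑ d' ∈ Finset.range (d + 1), expCoeff f hbar d' * Z hbar i (d - d')) := by
  obtain ⟨P, hP⟩ := (cRecursive_iff_exists_laurent α C Z).mp hZ
  exact (cRecursive_iff_exists_laurent α C (expMul f Z)).mpr
    ⟨expMulLaurentPart α C f Z P, expMul_eq_eval₂_add_recTail α C f hα Z P hP⟩

/-- If `Z` is `C`-recursive and `f ∈ F[u]` with `f(0) = 0`, then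
`Z̄ = e^{f(u)/hbar}·Z` (a Cauchy product of `u`-coefficients) is again `C`-recursive
with the same coefficients `C_i^j(d)`. -/
theorem stmt_6 {F : Type*} [Field F] [CharZero F] {n : ℕ} (α : Fin n → F)
    (hα : Function.Injective α) (C : Fin n → Fin n → ℕ → F) (Z : F → Fin n → ℕ → F)
    (hZ : CRecursive α C Z) (f : Polynomial F) (hf : f.coeff 0 = 0) :
    CRecursive α C (fun hbar i d =>
      ∑ d' ∈ Finset.range (d + 1), expCoeff f hbar d' * Z hbar i (d - d')) :=
  stmt_6_general α hα C Z hZ f
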